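/- arXiv:2203.06527 — 5 statements merged into one kernel-verified Lean document; each statement's English description precedes it below -/
import Mathlib

section
/- Let n ≥ 1, let T be an n×n real row-stochastic matrix, and let p ∈ (0,1). Then the matrix T_r := p·T·(I − (1−p)·T)⁻¹ is itself row-stochastic: all of its entries are nonnegative and each of its rows sums to 1. -/
/-!
Write `q = 1 - p`. In the ℓ∞ operator norm (maximal absolute row sum) a row-stochastic `T` has
`‖q • T‖ ≤ q < 1`, so `(1 - q • T)⁻¹ = ∑ₖ (q • T)^k` is a convergent Neumann series of
entrywise nonnegative matrices. Since `T *ᵥ 1 = 1` we get `(1 - q • T) *ᵥ 1 = p • 1`, hence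
`p • (1 - q • T)⁻¹` is row-stochastic, and so is its product with `T`.
-/

namespace Matrix

variable {ι : Type*} [Fintype ι] [DecidableEq ι]

attribute [local instance] Matrix.linftyOpNormedAddCommGroup Matrix.linftyOpNormedRing
  Matrix.linftyOpNormedSpace

theorem linfty_opNorm_le_one_of_mem_rowStochastic {T : Matrix ι ι ℝ}
    (hT : T ∈ rowStochastic ℝ ι) : ‖T‖ ≤ 1 := by
  rw [← NNReal.coe_one, ← coe_nnnorm, NNReal.coe_le_coe, linfty_opNNNorm_def]
  refine Finset.sup_le fun i _ => ?_
  rw [← NNReal.coe_le_coe]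
  push_cast
  simp_rw [Real.norm_of_nonneg (nonneg_of_mem_rowStochastic hT)]
  exact (sum_row_of_mem_rowStochastic hT i).le

theorem inv_one_sub_apply_nonneg {M : Matrix ι ι ℝ}
    (hM : ∀ i j, 0 ≤ M i j) (hnorm : ‖M‖ < 1) (i j : ι) : 0 ≤ (1 - M)⁻¹ i j := by
  have hsum : HasSum (fun k : ℕ => M ^ k) (1 - M)⁻¹ := by
    rw [nonsing_inv_eq_ringInverse]
    exact hasSum_geom_series_inverse M hnorm
  exact (Pi.hasSum.1 (Pi.hasSum.1 hsum i) j).nonneg fun k => pow_apply_nonneg hM k i j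

theorem linfty_opNorm_smul_lt_one_of_mem_rowStochastic {T : Matrix ι ι ℝ}
    (hT : T ∈ rowStochastic ℝ ι) {q : ℝ} (hq0 : 0 ≤ q) (hq1 : q < 1) : ‖q • T‖ < 1 :=
  calc ‖q • T‖ ≤ ‖q‖ * ‖T‖ := norm_smul_le q T
    _ ≤ q * 1 := by
      rw [Real.norm_of_nonneg hq0]
      exact mul_le_mul_of_nonneg_left (linfty_opNorm_le_one_of_mem_rowStochastic hT) hq0
    _ < 1 := by linarith

theorem one_sub_smul_mulVec_one_of_mem_rowStochastic {T : Matrix ι ι ℝ}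
    (hT : T ∈ rowStochastic ℝ ι) (q : ℝ) : (1 - q • T) *ᵥ 1 = (1 - q) • (1 : ι → ℝ) := by
  rw [sub_mulVec, one_mulVec, smul_mulVec, one_vecMul_of_mem_rowStochastic hT, sub_smul,
    one_smul]

theorem smul_inv_one_sub_smul_mem_rowStochastic {T : Matrix ι ι ℝ}
    (hT : T ∈ rowStochastic ℝ ι) {q : ℝ} (hq0 : 0 ≤ q) (hq1 : q < 1) :
    (1 - q) • (1 - q • T)⁻¹ ∈ rowStochastic ℝ ι := by
  have hnorm := linfty_opNorm_smul_lt_one_of_mem_rowStochastic hT hq0 hq1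
  have hdet : IsUnit (1 - q • T).det :=
    (isUnit_iff_isUnit_det _).1 (isUnit_one_sub_of_norm_lt_one hnorm)
  have hqT : ∀ i j, 0 ≤ (q • T) i j := fun i j =>
    mul_nonneg hq0 (nonneg_of_mem_rowStochastic hT)
  refine ⟨fun i j => mul_nonneg (by linarith) (inv_one_sub_apply_nonneg hqT hnorm i j), ?_⟩
  calc ((1 - q) • (1 - q • T)⁻¹) *ᵥ 1 = (1 - q • T)⁻¹ *ᵥ ((1 - q • T) *ᵥ 1) := by
        rw [one_sub_smul_mulVec_one_of_mem_rowStochastic hT, mulVec_smul, smul_mulVec]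
    _ = 1 := by rw [mulVec_mulVec, nonsing_inv_mul _ hdet, one_mulVec]

end Matrix

theorem stmt2_general (n : ℕ) (T : Matrix (Fin n) (Fin n) ℝ)
    (hTnonneg : ∀ i j, 0 ≤ T i j) (hTrow : ∀ i, ∑ j, T i j = 1)
    (p : ℝ) (hp0 : 0 < p) (hp1 : p < 1) :
    (∀ i j, 0 ≤ (p • (T * (1 - (1 - p) • T)⁻¹)) i j) ∧
    (∀ i, ∑ j, (p • (T * (1 - (1 - p) • T)⁻¹)) i j = 1) := by
  have hT : T ∈ Matrix.rowStochastic ℝ (Fin n) :=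
    Matrix.mem_rowStochastic_iff_sum.2 ⟨hTnonneg, hTrow⟩
  have h := mul_mem hT
    (Matrix.smul_inv_one_sub_smul_mem_rowStochastic hT (q := 1 - p) (by linarith) (by linarith))
  rw [sub_sub_cancel, Matrix.mul_smul] at h
  exact Matrix.mem_rowStochastic_iff_sum.1 h

/-- For an `n × n` real row-stochastic matrix `T` and `p ∈ (0,1)`,
the matrix `T_r := p • T * (I - (1-p) • T)⁻¹` is itself row-stochastic: all entries
are nonnegative and each row sums to `1`. -/
theorem stmt2 (n : ℕ) (hn : 1 ≤ n) (T : Matrix (Fin n) (Fin n) ℝ)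
    (hTnonneg : ∀ i j, 0 ≤ T i j) (hTrow : ∀ i, ∑ j, T i j = 1)
    (p : ℝ) (hp0 : 0 < p) (hp1 : p < 1) :
    (∀ i j, 0 ≤ (p • (T * (1 - (1 - p) • T)⁻¹)) i j) ∧
    (∀ i, ∑ j, (p • (T * (1 - (1 - p) • T)⁻¹)) i j = 1) :=
  stmt2_general n T hTnonneg hTrow p hp0 hp1
end

section
/- Let n ≥ 1, let T be an n×n real row-stochastic matrix, let p ∈ (0,1), and set T_r := p·T·(I − (1−p)·T)⁻¹. Then the matrix p·I + (1−p)·T_r is invertible and (p·I + (1−p)·T_r)⁻¹·T_r = T. That is, the forward ('backward transformation' inversion) formula F_p(T_r) := (p·I + (1−p)·T_r)⁻¹·T_r recovers the original transition matrix T from T_r and p. -/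
/-!
Write `A := 1 - (1 - p) • T`. Since `A + (1 - p) • T = 1`,
`p • 1 + (1 - p) • B_p(T) = p • (A + (1 - p) • T) * A⁻¹ = p • A⁻¹`, so
`F_p(B_p(T)) = A * T * A⁻¹ = T` because `T` commutes with `A`. The matrix `A` is invertible
because for a row-stochastic `T` and `|1 - p| < 1` it is strictly diagonally dominant.
-/

open Finset

namespace Matrix

variable {ι K : Type*} [Fintype ι] [DecidableEq ι]

theorem isUnit_one_sub_smul_of_sum_norm_le_one [NormedField K] {T : Matrix ι ι K} {q : K}
    (hT : ∀ i, ∑ j, ‖T i j‖ ≤ 1) (hq : ‖q‖ < 1) : IsUnit (1 - q • T) := by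
  rw [isUnit_iff_isUnit_det, isUnit_iff_ne_zero]
  refine det_ne_zero_of_sum_row_lt_diag fun k => ?_
  have hoff : ∑ j ∈ univ.erase k, ‖(1 - q • T) k j‖ = ‖q‖ * ∑ j ∈ univ.erase k, ‖T k j‖ := by
    rw [mul_sum]
    refine sum_congr rfl fun j hj => ?_
    rw [sub_apply, one_apply_ne (ne_of_mem_erase hj).symm, zero_sub, norm_neg, smul_apply,
      smul_eq_mul, norm_mul]
  have hrow : ∑ j ∈ univ.erase k, ‖T k j‖ ≤ 1 - ‖T k k‖ := by
    linarith [hT k, sum_erase_add univ (fun j => ‖T k j‖) (mem_univ k)]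
  have hdiag : 1 - ‖q‖ * ‖T k k‖ ≤ ‖(1 - q • T) k k‖ := by
    rw [sub_apply, one_apply_eq, smul_apply, smul_eq_mul, ← norm_mul, ← norm_one (α := K)]
    exact norm_sub_norm_le _ _
  calc ∑ j ∈ univ.erase k, ‖(1 - q • T) k j‖
      ≤ ‖q‖ * (1 - ‖T k k‖) := hoff ▸ mul_le_mul_of_nonneg_left hrow (norm_nonneg q)
    _ < 1 - ‖q‖ * ‖T k k‖ := by linarith
    _ ≤ ‖(1 - q • T) k k‖ := hdiag

variable [Field K]

noncomputable def backwardTransform (p : K) (T : Matrix ι ι K) : Matrix ι ι K :=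
  p • (T * (1 - (1 - p) • T)⁻¹)

noncomputable def forwardTransform (p : K) (S : Matrix ι ι K) : Matrix ι ι K :=
  (p • 1 + (1 - p) • S)⁻¹ * S

variable {p : K} {T : Matrix ι ι K}

theorem smul_one_add_smul_backwardTransform (hA : IsUnit (1 - (1 - p) • T)) :
    p • 1 + (1 - p) • backwardTransform p T = p • (1 - (1 - p) • T)⁻¹ := by
  set A := 1 - (1 - p) • T
  have hAA : A * A⁻¹ = 1 := mul_nonsing_inv A ((isUnit_iff_isUnit_det A).mp hA)
  calc p • 1 + (1 - p) • backwardTransform p T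
      = p • ((A + (1 - p) • T) * A⁻¹) := by
        rw [backwardTransform, add_mul, hAA, smul_mul, smul_add, smul_comm]
    _ = p • A⁻¹ := by rw [sub_add_cancel, one_mul]

theorem isUnit_smul_one_add_smul_backwardTransform (hp : p ≠ 0)
    (hA : IsUnit (1 - (1 - p) • T)) : IsUnit (p • 1 + (1 - p) • backwardTransform p T) := by
  rw [smul_one_add_smul_backwardTransform hA]
  exact (isUnit_nonsing_inv_iff.mpr hA).smul (Units.mk0 p hp)

theorem forwardTransform_backwardTransform (hp : p ≠ 0) (hA : IsUnit (1 - (1 - p) • T)) :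
    forwardTransform p (backwardTransform p T) = T := by
  set A := 1 - (1 - p) • T
  have hAdet := (isUnit_iff_isUnit_det A).mp hA
  have hinv : (p • A⁻¹)⁻¹ = p⁻¹ • A := inv_eq_left_inv <| by
    rw [smul_mul_smul_comm, inv_mul_cancel₀ hp, mul_nonsing_inv A hAdet, one_smul]
  have hcomm : A * T = T * A := by
    simp only [A, sub_mul, mul_sub, one_mul, mul_one, smul_mul, Matrix.mul_smul]
  rw [forwardTransform, smul_one_add_smul_backwardTransform hA, hinv, backwardTransform,
    smul_mul_smul_comm, inv_mul_cancel₀ hp, one_smul, ← Matrix.mul_assoc, hcomm,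
    Matrix.mul_assoc, mul_nonsing_inv A hAdet, mul_one]

end Matrix

theorem stmt3_general (n : ℕ) (T : Matrix (Fin n) (Fin n) ℝ)
    (hTnonneg : ∀ i j, 0 ≤ T i j) (hTrow : ∀ i, ∑ j, T i j = 1)
    (p : ℝ) (hp0 : 0 < p) (hp1 : p < 1) :
    IsUnit (p • (1 : Matrix (Fin n) (Fin n) ℝ)
        + (1 - p) • (p • (T * (1 - (1 - p) • T)⁻¹))) ∧
    (p • (1 : Matrix (Fin n) (Fin n) ℝ)
        + (1 - p) • (p • (T * (1 - (1 - p) • T)⁻¹)))⁻¹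
      * (p • (T * (1 - (1 - p) • T)⁻¹)) = T := by
  have hA : IsUnit (1 - (1 - p) • T) := by
    refine Matrix.isUnit_one_sub_smul_of_sum_norm_le_one (fun i => ?_) ?_
    · simp only [Real.norm_of_nonneg (hTnonneg i _), hTrow i, le_refl]
    · rw [Real.norm_eq_abs, abs_lt]
      constructor <;> linarith
  exact ⟨Matrix.isUnit_smul_one_add_smul_backwardTransform hp0.ne' hA,
    Matrix.forwardTransform_backwardTransform hp0.ne' hA⟩

/-- Let `T` be an `n × n` real row-stochastic matrix, `p ∈ (0,1)`, and
`T_r := p • T * (I - (1-p) • T)⁻¹`.  Then `p • I + (1-p) • T_r` is invertible and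
`(p • I + (1-p) • T_r)⁻¹ * T_r = T`: the forward transformation
`F_p(T_r) := (p • I + (1-p) • T_r)⁻¹ * T_r` recovers `T` from `T_r` and `p`. -/
theorem stmt3 (n : ℕ) (hn : 1 ≤ n) (T : Matrix (Fin n) (Fin n) ℝ)
    (hTnonneg : ∀ i j, 0 ≤ T i j) (hTrow : ∀ i, ∑ j, T i j = 1)
    (p : ℝ) (hp0 : 0 < p) (hp1 : p < 1) :
    IsUnit (p • (1 : Matrix (Fin n) (Fin n) ℝ)
        + (1 - p) • (p • (T * (1 - (1 - p) • T)⁻¹))) ∧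
    (p • (1 : Matrix (Fin n) (Fin n) ℝ)
        + (1 - p) • (p • (T * (1 - (1 - p) • T)⁻¹)))⁻¹
      * (p • (T * (1 - (1 - p) • T)⁻¹)) = T :=
  stmt3_general n T hTnonneg hTrow p hp0 hp1
end

section
/- Let n ≥ 1, let T be an n×n real row-stochastic matrix, and let q, q₀ ∈ (0,1). Then composing backward transformations multiplies the keep probabilities: B_q(B_{q₀}(T)) = B_{q·q₀}(T), where B_p(T) := p·T·(I − (1−p)·T)⁻¹. In particular all the matrices appearing (I − (1−q₀)·T, I − (1−q)·B_{q₀}(T), and I − (1−q·q₀)·T) are invertible. -/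
/-- The backward (observed-chain) transformation `B_p(T) := p • T * (I - (1-p) • T)⁻¹`. -/
noncomputable def Bwd {n : ℕ} (p : ℝ) (T : Matrix (Fin n) (Fin n) ℝ) : Matrix (Fin n) (Fin n) ℝ :=
  p • (T * (1 - (1 - p) • T)⁻¹)

lemma isUnit_aux {n : ℕ} (T : Matrix (Fin n) (Fin n) ℝ)
    (hTnonneg : ∀ i j, 0 ≤ T i j) (hTrow : ∀ i, ∑ j, T i j = 1)
    (c : ℝ) (hc0 : 0 ≤ c) (hc1 : c < 1) : IsUnit (1 - c • T) := by
  rw [Matrix.isUnit_iff_isUnit_det, isUnit_iff_ne_zero]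
  apply det_ne_zero_of_sum_row_lt_diag
  intro k
  have hdiag : c * T k k < 1 := by
    have h1 : T k k ≤ 1 := by
      rw [← hTrow k]
      exact Finset.single_le_sum (fun j _ => hTnonneg k j) (Finset.mem_univ k)
    calc c * T k k ≤ c * 1 := by nlinarith [hTnonneg k k]
      _ < 1 := by linarith
  have hsum : ∑ j ∈ Finset.univ.erase k, ‖(1 - c • T : Matrix (Fin n) (Fin n) ℝ) k j‖
      = c * (1 - T k k) := by
    rw [show c * (1 - T k k) = ∑ j ∈ Finset.univ.erase k, c * T k j by
      rw [← Finset.mul_sum, Finset.sum_erase_eq_sub (Finset.mem_univ k), hTrow k]]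
    refine Finset.sum_congr rfl fun j hj => ?_
    have hjk : j ≠ k := Finset.ne_of_mem_erase hj
    simp [Matrix.sub_apply, Matrix.one_apply_ne (Ne.symm hjk), Matrix.smul_apply,
      abs_of_nonneg hc0, abs_of_nonneg (hTnonneg k j)]
  rw [hsum]
  have hd : (1 - c • T : Matrix (Fin n) (Fin n) ℝ) k k = 1 - c * T k k := by
    simp [Matrix.sub_apply, Matrix.one_apply_eq, Matrix.smul_apply]
  rw [hd, Real.norm_eq_abs, abs_of_pos (by linarith)]
  nlinarith [hTnonneg k k]

/-- For an `n × n` real row-stochastic matrix `T` and `q, q₀ ∈ (0,1)`,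
composing backward transformations multiplies the keep probabilities:
`B_q(B_{q₀}(T)) = B_{q·q₀}(T)`; in particular all the matrices
`I - (1-q₀) • T`, `I - (1-q) • B_{q₀}(T)` and `I - (1-q·q₀) • T` are invertible. -/
theorem stmt9 (n : ℕ) (hn : 1 ≤ n) (T : Matrix (Fin n) (Fin n) ℝ)
    (hTnonneg : ∀ i j, 0 ≤ T i j) (hTrow : ∀ i, ∑ j, T i j = 1)
    (q q₀ : ℝ) (hq0 : 0 < q) (hq1 : q < 1) (hq₀0 : 0 < q₀) (hq₀1 : q₀ < 1) :
    IsUnit (1 - (1 - q₀) • T) ∧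
    IsUnit (1 - (1 - q) • Bwd q₀ T) ∧
    IsUnit (1 - (1 - q * q₀) • T) ∧
    Bwd q (Bwd q₀ T) = Bwd (q * q₀) T := by
  set A : Matrix (Fin n) (Fin n) ℝ := 1 - (1 - q₀) • T with hAdef
  set C : Matrix (Fin n) (Fin n) ℝ := 1 - (1 - q * q₀) • T with hCdef
  have hA : IsUnit A := isUnit_aux T hTnonneg hTrow (1 - q₀) (by linarith) (by linarith)
  have hC : IsUnit C := isUnit_aux T hTnonneg hTrow (1 - q * q₀)
    (by nlinarith) (by nlinarith)
  have hAdet : IsUnit A.det := (Matrix.isUnit_iff_isUnit_det A).mp hA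
  have hCdet : IsUnit C.det := (Matrix.isUnit_iff_isUnit_det C).mp hC
  have hAA : A * A⁻¹ = 1 := Matrix.mul_nonsing_inv A hAdet
  have hAA' : A⁻¹ * A = 1 := Matrix.nonsing_inv_mul A hAdet
  have hCC : C * C⁻¹ = 1 := Matrix.mul_nonsing_inv C hCdet
  have hCC' : C⁻¹ * C = 1 := Matrix.nonsing_inv_mul C hCdet
  -- key identity
  have hkey : 1 - (1 - q) • Bwd q₀ T = C * A⁻¹ := by
    have hCA : C = A - ((1 - q) * q₀) • T := by
      rw [hCdef, hAdef, sub_sub, ← add_smul]; ring_nf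
    rw [hCA, Matrix.sub_mul, hAA, Bwd, smul_smul, Matrix.smul_mul]
  have hunit2 : IsUnit (1 - (1 - q) • Bwd q₀ T) := by
    rw [hkey]
    exact hC.mul (Matrix.isUnit_nonsing_inv_iff.mpr hA)
  refine ⟨hA, hunit2, hC, ?_⟩
  have hinv : (1 - (1 - q) • Bwd q₀ T)⁻¹ = A * C⁻¹ := by
    rw [hkey]
    apply Matrix.inv_eq_right_inv
    rw [Matrix.mul_assoc, ← Matrix.mul_assoc A⁻¹, hAA', Matrix.one_mul, hCC]
  show q • (Bwd q₀ T * (1 - (1 - q) • Bwd q₀ T)⁻¹) = (q * q₀) • (T * (1 - (1 - q * q₀) • T)⁻¹)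
  rw [hinv, Bwd, Matrix.smul_mul, smul_smul, Matrix.mul_assoc, ← Matrix.mul_assoc _ A,
    hAA', Matrix.one_mul]
end

section
/- Let n ≥ 1, let T be an n×n real row-stochastic matrix, let p ∈ (0,1), and let ε be a real number with 0 ≤ ε < p and 1 − p + ε < 1 (i.e. ε < p). Then the series p·(p+ε)·T + p·(p−ε)·(1−p−ε)·∑_{m=2}^{∞} (1−p+ε)^{m−2}·T^m converges in the matrix norm, and its sum equals T · p·(p+ε) · ( I + ((p−ε)/(p+ε)) · ((1−p−ε)/(1−p+ε)) · ( (I − (1−p+ε)·T)⁻¹ − I ) ). (This is the un-normalized observed-chain transition matrix when the omission process is a two-state Markov chain with stay bias ε instead of i.i.d. Bernoulli omissions.) -/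
/-!
With `r = 1 - p + ε`, the tail is `c • T² * ∑ₘ (r • T)ᵐ` for `c = p(p-ε)(1-p-ε)`. A row-stochastic
matrix has `ℓ∞` operator norm at most `1`, so `‖r • T‖ < 1` and the geometric series converges
to `R = (1 - r • T)⁻¹`. The closed form then reduces to the resolvent identity `R - 1 = r • T * R`.
-/

open Matrix
open scoped Matrix.Norms.Operator Ring

theorem Matrix.linfty_opNorm_le_one_of_mem_rowStochastic_s15 {n : Type*} [Fintype n] [DecidableEq n]
    {M : Matrix n n ℝ} (hM : M ∈ rowStochastic ℝ n) : ‖M‖ ≤ 1 := by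
  have hrow : ∀ i, ∑ j, ‖M i j‖₊ = 1 := fun i => by
    ext
    push_cast
    simp_rw [Real.norm_of_nonneg (nonneg_of_mem_rowStochastic hM)]
    exact sum_row_of_mem_rowStochastic hM i
  rw [linfty_opNorm_def, NNReal.coe_le_one]
  exact Finset.sup_le fun i _ => (hrow i).le

theorem hasSum_pow_smul_pow_add {A : Type*} [NormedRing A] [NormedAlgebra ℝ A]
    [HasSummableGeomSeries A] {a : A} {r : ℝ} (h : ‖r • a‖ < 1) (k : ℕ) :
    HasSum (fun m : ℕ => r ^ m • a ^ (m + k)) (a ^ k * (1 - r • a)⁻¹ʳ) := by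
  have hterm : ∀ m : ℕ, r ^ m • a ^ (m + k) = a ^ k * (r • a) ^ m := fun m => by
    rw [smul_pow, mul_smul_comm, ← pow_add, add_comm]
  simpa only [hterm] using (hasSum_geom_series_inverse (r • a) h).mul_left (a ^ k)

theorem observedChain_closedForm {A : Type*} [Ring A] [Algebra ℝ A] {T R : A} {p ε : ℝ}
    (hpε : p + ε ≠ 0) (hr : 1 - p + ε ≠ 0) (hR : (1 - (1 - p + ε) • T) * R = 1) :
    (p * (p + ε)) • (T * (1 + (((p - ε) / (p + ε)) * ((1 - p - ε) / (1 - p + ε))) • (R - 1)))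
        - (p * (p + ε)) • T
      = (p * (p - ε) * (1 - p - ε)) • (T ^ 2 * R) := by
  have hresolvent : R - 1 = (1 - p + ε) • (T * R) := by
    rw [← hR, sub_mul, one_mul, sub_sub_cancel, smul_mul_assoc]
  rw [hresolvent, mul_add T, mul_one, smul_add, add_sub_cancel_left, mul_smul_comm, smul_smul,
    mul_smul_comm, smul_smul, ← mul_assoc T, ← sq T]
  congr 1
  field_simp

theorem stmt15_general (n : ℕ) (T : Matrix (Fin n) (Fin n) ℝ)
    (hTnonneg : ∀ i j, 0 ≤ T i j) (hTrow : ∀ i, ∑ j, T i j = 1)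
    (p : ℝ) (hp0 : 0 < p) (hp1 : p < 1)
    (ε : ℝ) (hε0 : 0 ≤ ε) (hεp : ε < p) :
    HasSum
      (fun m : ℕ => (p * (p - ε) * (1 - p - ε) * (1 - p + ε) ^ m) • T ^ (m + 2))
      ((p * (p + ε)) •
          (T * (1 + (((p - ε) / (p + ε)) * ((1 - p - ε) / (1 - p + ε))) •
              ((1 - (1 - p + ε) • T)⁻¹ - 1)))
        - (p * (p + ε)) • T) := by
  have hT : ‖T‖ ≤ 1 :=
    linfty_opNorm_le_one_of_mem_rowStochastic_s15 (mem_rowStochastic_iff_sum.2 ⟨hTnonneg, hTrow⟩)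
  have hx : ‖(1 - p + ε) • T‖ < 1 := by
    rw [norm_smul, Real.norm_of_nonneg (by linarith)]
    nlinarith [norm_nonneg T]
  have hR := Ring.mul_inverse_cancel (1 - (1 - p + ε) • T) (Units.oneSub _ hx).isUnit
  rw [nonsing_inv_eq_ringInverse, observedChain_closedForm (by linarith) (by linarith) hR]
  have hsum := (hasSum_pow_smul_pow_add hx 2).const_smul (p * (p - ε) * (1 - p - ε))
  simp only [smul_smul] at hsum
  exact hsum

/-- Let `T` be an `n × n` real row-stochastic matrix, `p ∈ (0,1)`,
and `ε` real with `0 ≤ ε < p` (so that `1 - p + ε < 1`).  Then the series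
`p(p+ε) • T + p(p-ε)(1-p-ε) • ∑_{m=2}^∞ (1-p+ε)^{m-2} • T^m` converges (in the matrix
norm), with sum
`T * (p(p+ε) • (I + ((p-ε)/(p+ε)) ((1-p-ε)/(1-p+ε)) • ((I - (1-p+ε) • T)⁻¹ - I)))`.
Below the tail `∑_{m=2}^∞` is reindexed by `m ↦ m + 2`, and the `HasSum` statement
asserts that the tail sums to the total minus the leading term `p(p+ε) • T`. -/
theorem stmt15 (n : ℕ) (hn : 1 ≤ n) (T : Matrix (Fin n) (Fin n) ℝ)
    (hTnonneg : ∀ i j, 0 ≤ T i j) (hTrow : ∀ i, ∑ j, T i j = 1)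
    (p : ℝ) (hp0 : 0 < p) (hp1 : p < 1)
    (ε : ℝ) (hε0 : 0 ≤ ε) (hεp : ε < p) :
    HasSum
      (fun m : ℕ => (p * (p - ε) * (1 - p - ε) * (1 - p + ε) ^ m) • T ^ (m + 2))
      ((p * (p + ε)) •
          (T * (1 + (((p - ε) / (p + ε)) * ((1 - p - ε) / (1 - p + ε))) •
              ((1 - (1 - p + ε) • T)⁻¹ - 1)))
        - (p * (p + ε)) • T) :=
  stmt15_general n T hTnonneg hTrow p hp0 hp1 ε hε0 hεp
end

section
/- Let n ≥ 1, let T be an invertible n×n real row-stochastic matrix, let p ∈ (0,1), and let ε be a real number with 0 ≤ ε < p (so p + ε > 0 and I − (1−p+ε)·T is invertible). Set S := (p+ε)·T·(I − (1−p+ε)·T)⁻¹, which is invertible. Then (1−p)·I + p·S⁻¹ = (ε·(1−2p)/(p+ε))·I + (p/(p+ε))·T⁻¹. In particular, applying the (misspecified) backward-inversion with parameter p to the Markov-omission observed matrix S yields ((ε·(1−2p)/(p+ε))·I + (p/(p+ε))·T⁻¹)⁻¹ whenever the latter bracket is invertible, so for ε = 0 the ground-truth T is recovered exactly. -/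
/-- Let `T` be an invertible `n × n` real row-stochastic matrix,
`p ∈ (0,1)`, and `0 ≤ ε < p` (so `p + ε > 0` and `I - (1-p+ε) • T` is invertible).
Set `S := (p+ε) • T * (I - (1-p+ε) • T)⁻¹`, which is invertible.  Then
`(1-p) • I + p • S⁻¹ = (ε(1-2p)/(p+ε)) • I + (p/(p+ε)) • T⁻¹`.
In particular, the (misspecified) backward-inversion with parameter `p` applied to `S`
yields `((ε(1-2p)/(p+ε)) • I + (p/(p+ε)) • T⁻¹)⁻¹` whenever that bracket is
invertible, so for `ε = 0` the ground-truth `T` is recovered exactly. -/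
theorem stmt16 (n : ℕ) (hn : 1 ≤ n) (T : Matrix (Fin n) (Fin n) ℝ)
    (hTunit : IsUnit T)
    (hTnonneg : ∀ i j, 0 ≤ T i j) (hTrow : ∀ i, ∑ j, T i j = 1)
    (p : ℝ) (hp0 : 0 < p) (hp1 : p < 1)
    (ε : ℝ) (hε0 : 0 ≤ ε) (hεp : ε < p) :
    IsUnit (1 - (1 - p + ε) • T) ∧
    IsUnit ((p + ε) • (T * (1 - (1 - p + ε) • T)⁻¹)) ∧
    (1 - p) • (1 : Matrix (Fin n) (Fin n) ℝ)
        + p • ((p + ε) • (T * (1 - (1 - p + ε) • T)⁻¹))⁻¹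
      = (ε * (1 - 2 * p) / (p + ε)) • (1 : Matrix (Fin n) (Fin n) ℝ)
        + (p / (p + ε)) • T⁻¹ := by
  set c : ℝ := 1 - p + ε with hc
  have hc0 : 0 ≤ c := by simp [hc]; nlinarith
  have hc1 : c < 1 := by simp [hc]; linarith
  set B : Matrix (Fin n) (Fin n) ℝ := 1 - c • T with hB
  -- B is strictly row diagonally dominant
  have hBdet : B.det ≠ 0 := by
    apply det_ne_zero_of_sum_row_lt_diag
    intro k
    have hTk := hTrow k
    have h1 : ∑ j ∈ Finset.univ.erase k, ‖B k j‖
        = ∑ j ∈ Finset.univ.erase k, c * T k j := by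
      apply Finset.sum_congr rfl
      intro j hj
      have hjk : j ≠ k := (Finset.mem_erase.mp hj).1
      simp [hB, Matrix.sub_apply, Matrix.one_apply_ne hjk.symm, Real.norm_eq_abs,
        abs_of_nonneg hc0, abs_of_nonneg (hTnonneg k j),
        abs_of_nonneg (mul_nonneg hc0 (hTnonneg k j))]
    rw [h1]
    have h2 : ∑ j ∈ Finset.univ.erase k, c * T k j = c * (1 - T k k) := by
      rw [← Finset.mul_sum, Finset.sum_erase_eq_sub (Finset.mem_univ k), hTk]
    rw [h2]
    have hBkk : B k k = 1 - c * T k k := by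
      simp [hB, Matrix.sub_apply, Matrix.one_apply_eq]
    have hTkk1 : T k k ≤ 1 := by
      have : ∑ j ∈ Finset.univ.erase k, T k j ≥ 0 :=
        Finset.sum_nonneg fun j _ => hTnonneg k j
      have := Finset.sum_erase_eq_sub (f := fun j => T k j) (Finset.mem_univ k)
      rw [hTk] at this
      linarith [this ▸ ‹∑ j ∈ Finset.univ.erase k, T k j ≥ 0›]
    have hpos : 0 < 1 - c * T k k := by nlinarith [hTnonneg k k]
    rw [hBkk, Real.norm_eq_abs, abs_of_pos hpos]
    nlinarith [hTnonneg k k]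
  have hBunit : IsUnit B := (Matrix.isUnit_iff_isUnit_det B).mpr (isUnit_iff_ne_zero.mpr hBdet)
  have hpε : (0:ℝ) < p + ε := by linarith
  have hTdet : IsUnit T.det := (Matrix.isUnit_iff_isUnit_det T).mp hTunit
  have hTB : IsUnit (T * B⁻¹) := hTunit.mul (Matrix.isUnit_nonsing_inv_iff.mpr hBunit)
  have hS : IsUnit ((p + ε) • (T * B⁻¹)) := by
    rw [Matrix.isUnit_iff_isUnit_det, Matrix.det_smul]
    exact (IsUnit.pow _ (isUnit_iff_ne_zero.mpr hpε.ne')).mul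
      ((Matrix.isUnit_iff_isUnit_det _).mp hTB)
  refine ⟨hBunit, hS, ?_⟩
  have hSinv : ((p + ε) • (T * B⁻¹))⁻¹ = (p + ε)⁻¹ • (B * T⁻¹) := by
    apply Matrix.inv_eq_right_inv
    rw [Matrix.smul_mul, Matrix.mul_smul, smul_smul, mul_inv_cancel₀ hpε.ne', one_smul,
      Matrix.mul_assoc, ← Matrix.mul_assoc B⁻¹,
      Matrix.nonsing_inv_mul _ ((Matrix.isUnit_iff_isUnit_det _).mp hBunit),
      Matrix.one_mul, Matrix.mul_nonsing_inv _ hTdet]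
  rw [hSinv]
  have hBT : B * T⁻¹ = T⁻¹ - c • 1 := by
    rw [hB, Matrix.sub_mul, Matrix.one_mul, Matrix.smul_mul,
      Matrix.mul_nonsing_inv _ hTdet]
  rw [hBT]
  have : (ε * (1 - 2 * p) / (p + ε)) = (1 - p) + p * ((p+ε)⁻¹ * (-c)) := by
    field_simp
    ring
  rw [smul_sub]
  ext i j
  simp only [Matrix.add_apply, Matrix.sub_apply, Matrix.smul_apply, smul_eq_mul]
  field_simp
  ring
end
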